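/- Let k be a number field and let x = (x₁, x₂) be a pair of 3×3 matrices over k. Then the binary cubic form F_x(X,Y) = det(X·x₁ + Y·x₂) is irreducible as an element of the polynomial ring k[X,Y] if and only if x is k-stable, i.e., for every g = (g₁,g₂,g₃) ∈ GL₃(k) × GL₃(k) × GL₂(k) the convex hull of the finite set of projected weight vectors { (e_j − (1/3)(1,1,1), e_k − (1/3)(1,1,1), f_i − (1/2)(1,1)) : 1 ≤ j,k ≤ 3, 1 ≤ i ≤ 2, and the (j,k) entry of (g·x)_i is nonzero } contains a neighborhood of the origin in the subspace 𝔱* = { (u,w,z) ∈ ℝ³ × ℝ³ × ℝ² : the coordinates of u sum to 0, the coordinates of w sum to 0, the coordinates of z sum to 0 }. Here e_j ∈ ℝ³ and f_i ∈ ℝ² are standard basis vectors. (This is Theorem (2.1) for the E₆ case, in which the set L₀ equals the set of x with F_x irreducible.) -/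

import Mathlib

open Matrix MvPolynomial
open Metric Filter Topology

/-!
A binary form of degree 2 or 3 over a field is irreducible exactly when it has no nontrivial
zero: a zero `(t, 1)` is a root of the dehomogenization, whose linear factor homogenizes to a
factor of the form, and conversely a factorization of a form of degree at most 3 has a factor of
degree 1. For `F_x` a nontrivial zero is a singular member `w₁x₁ + w₂x₂` of the pencil.

If the pencil has a singular member, move it to `x₁` by `g₃`, its kernel to the last basis vector
by `g₂`, and the image of that vector under the other member to the last basis vector by `g₁`:
then the third column of both matrices of `g·x` vanishes off the diagonal, and the direction
`(1, 1, -2; -1, -1, 2; 0)` of `𝔱*` is nonpositive on every weight of `g·x`.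
Conversely, let `v = (a, b, c) ≠ 0` in `𝔱*` be nonpositive on the weights of `g·x`. A permutation
`σ` with `(g·x)ᵢ (σ k) k ≠ 0` for all `k` has `∑ₖ (a (σ k) + b k + cᵢ) = 3cᵢ`, so if `cᵢ > 0`
then `det (g·x)ᵢ = 0`. If `c = 0`, such permutations satisfy `a (σ k) + b k = 0`; as some value
of `a` is attained only once, they all share one entry, and the member of the pencil vanishing
there is singular.

Finally, the convex hull of a finite set contains a neighbourhood of `0` iff every nonzero linear
form is positive somewhere on the set (Hahn–Banach, and compactness of the unit sphere of the
dual), and the linear forms on `𝔱*` are the pairings with its elements.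
-/

/-! ### Binary forms -/

namespace MvPolynomial

variable {K : Type*} [Field K]

noncomputable def dehomogenize : MvPolynomial (Fin 2) K →ₐ[K] Polynomial K :=
  aeval ![Polynomial.X, 1]

theorem natDegree_dehomogenize_le_totalDegree (P : MvPolynomial (Fin 2) K) :
    (dehomogenize P).natDegree ≤ P.totalDegree := by
  conv_lhs => rw [P.as_sum, map_sum]
  refine Polynomial.natDegree_sum_le_of_forall_le _ _ fun m hm => ?_
  rw [dehomogenize, aeval_monomial, Finsupp.prod_fintype _ _ (by simp), Fin.prod_univ_two]
  simp only [Matrix.cons_val_zero, Matrix.cons_val_one, one_pow, mul_one]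
  calc _ ≤ m 0 := (Polynomial.natDegree_C_mul_le _ _).trans (by simp)
    _ ≤ m.degree := by simp [Finsupp.degree_eq_sum, Fin.sum_univ_two]
    _ ≤ P.totalDegree := le_totalDegree hm

theorem eval_dehomogenize (P : MvPolynomial (Fin 2) K) (t : K) :
    (dehomogenize P).eval t = eval ![t, 1] P := by
  rw [dehomogenize]
  induction P using MvPolynomial.induction_on with
  | C a => simp
  | add p q hp hq => simp [hp, hq]
  | mul_X p i hp => fin_cases i <;> simp [hp]

theorem isUnit_of_totalDegree_eq_zero {σ : Type*} {P : MvPolynomial σ K} (hP : P ≠ 0)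
    (hd : P.totalDegree = 0) : IsUnit P := by
  rw [totalDegree_eq_zero_iff_eq_C] at hd
  rw [hd] at hP ⊢
  exact (isUnit_iff_ne_zero.mpr fun h => hP (by rw [h, C_0])).map C

theorem IsHomogeneous.eq_zero_of_isUnit {σ : Type*} {P : MvPolynomial σ K} {d : ℕ}
    (hP : P.IsHomogeneous d) (hu : IsUnit P) : d = 0 := by
  obtain ⟨r, hr, rfl⟩ := isUnit_iff_eq_C_of_isReduced.mp hu
  exact hP.inj_right (isHomogeneous_C _ r) (C_ne_zero.mpr hr.ne_zero)

theorem IsHomogeneous.not_irreducible_mul {σ : Type*} {A B : MvPolynomial σ K} {m n : ℕ}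
    (hA : A.IsHomogeneous m) (hB : B.IsHomogeneous n) (hm : m ≠ 0) (hn : n ≠ 0) :
    ¬ Irreducible (A * B) := fun h =>
  (h.isUnit_or_isUnit rfl).elim (hm ∘ hA.eq_zero_of_isUnit) (hn ∘ hB.eq_zero_of_isUnit)

variable {F : MvPolynomial (Fin 2) K} {d : ℕ}

theorem IsHomogeneous.natDegree_dehomogenize_le (hF : F.IsHomogeneous d) :
    (dehomogenize F).natDegree ≤ d :=
  (natDegree_dehomogenize_le_totalDegree F).trans hF.totalDegree_le

theorem IsHomogeneous.homogenize_dehomogenize (hF : F.IsHomogeneous d) :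
    (dehomogenize F).homogenize d = F :=
  Polynomial.homogenize_eq_of_isHomogeneous hF rfl

theorem IsHomogeneous.not_irreducible_of_eval_eq_zero_of_apply_one_ne_zero
    (hF : F.IsHomogeneous d) (hd : 2 ≤ d) {w : Fin 2 → K} (hw : w 1 ≠ 0) (hFw : eval w F = 0) :
    ¬ Irreducible F := by
  set f := dehomogenize F
  have hfd : f.natDegree ≤ d := hF.natDegree_dehomogenize_le
  have hFf : f.homogenize d = F := hF.homogenize_dehomogenize
  set t := w 0 / w 1
  have hroot : f.IsRoot t := by
    have := Polynomial.eval_homogenize hfd w hw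
    rw [hFf, hFw] at this
    exact (mul_eq_zero.mp this.symm).resolve_right (pow_ne_zero _ hw)
  set q := f /ₘ (Polynomial.X - Polynomial.C t)
  have hfq : (Polynomial.X - Polynomial.C t) * q = f :=
    Polynomial.mul_divByMonic_eq_iff_isRoot.mpr hroot
  have hq : q.natDegree ≤ d - 1 := by
    rw [Polynomial.natDegree_divByMonic _ (Polynomial.monic_X_sub_C _),
      Polynomial.natDegree_X_sub_C]
    exact Nat.sub_le_sub_right hfd 1
  have hfactor := Polynomial.homogenize_mul (Polynomial.X - Polynomial.C t) q (m := 1)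
    (Polynomial.natDegree_X_sub_C t).le hq
  rw [hfq, Nat.add_sub_of_le (by omega : 1 ≤ d), hFf] at hfactor
  rw [hfactor]
  exact not_irreducible_mul (Polynomial.isHomogeneous_homogenize _)
    (Polynomial.isHomogeneous_homogenize _) one_ne_zero (by omega)

theorem IsHomogeneous.not_irreducible_of_eval_eq_zero (hF : F.IsHomogeneous d) (hd : 2 ≤ d)
    {w : Fin 2 → K} (hw : w ≠ 0) (hFw : eval w F = 0) : ¬ Irreducible F := by
  by_cases hw1 : w 1 ≠ 0
  · exact hF.not_irreducible_of_eval_eq_zero_of_apply_one_ne_zero hd hw1 hFw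
  have hw0 : w 0 ≠ 0 := fun h => hw (_root_.funext fun i => by fin_cases i <;> simp_all)
  let e := Equiv.swap (0 : Fin 2) 1
  rw [← MulEquiv.irreducible_iff (renameEquiv K e).toMulEquiv]
  refine (rename_isHomogeneous hF).not_irreducible_of_eval_eq_zero_of_apply_one_ne_zero hd
    (w := w ∘ e) (by simpa [e] using hw0) ?_
  simpa [eval_rename, Function.comp_def, e] using hFw

theorem IsHomogeneous.irreducible_of_forall_eval_ne_zero (hF : F.IsHomogeneous d) (hd1 : 1 ≤ d)
    (hd3 : d ≤ 3) (hF0 : ∀ w ≠ 0, eval w F ≠ 0) : Irreducible F := by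
  set f := dehomogenize F
  have hFf : f.homogenize d = F := hF.homogenize_dehomogenize
  have hF10 : eval ![1, 0] F ≠ 0 := hF0 _ (by simp)
  have hF0' : F ≠ 0 := by rintro rfl; simp at hF10
  have hfd : f.natDegree = d := by
    refine le_antisymm hF.natDegree_dehomogenize_le (not_lt.mp fun hlt => hF10 ?_)
    -- otherwise `X 1` divides `F`
    have hmul := Polynomial.homogenize_mul 1 f (m := 1) (by simp) (by omega : f.natDegree ≤ d - 1)
    rw [one_mul, Nat.add_sub_of_le hd1, hFf] at hmul
    simp [hmul]
  have hirr : Irreducible f := Polynomial.irreducible_of_degree_le_three_of_not_isRoot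
    (by rw [hfd, Finset.mem_Icc]; exact ⟨hd1, hd3⟩)
    fun t ht => hF0 ![t, 1] (by simp) (by rw [← eval_dehomogenize]; exact ht)
  have hunit : ∀ A B, F = A * B → IsUnit (dehomogenize A) → IsUnit A := by
    intro A B hAB hA
    have hA0 : A ≠ 0 := by rintro rfl; simp_all
    have hB0 : B ≠ 0 := by rintro rfl; simp_all
    have hdeg : A.totalDegree + B.totalDegree = d := by
      rw [← totalDegree_mul_of_isDomain hA0 hB0, ← hAB, hF.totalDegree hF0']
    have : d ≤ B.totalDegree :=
      calc d = (dehomogenize A * dehomogenize B).natDegree := by rw [← map_mul, ← hAB, hfd]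
        _ ≤ (dehomogenize A).natDegree + (dehomogenize B).natDegree := Polynomial.natDegree_mul_le
        _ = (dehomogenize B).natDegree := by
          rw [Polynomial.natDegree_eq_zero_of_isUnit hA, zero_add]
        _ ≤ B.totalDegree := natDegree_dehomogenize_le_totalDegree B
    exact isUnit_of_totalDegree_eq_zero hA0 (by omega)
  refine ⟨fun hu => by have := hF.eq_zero_of_isUnit hu; omega, fun A B hAB => ?_⟩
  rcases hirr.isUnit_or_isUnit (show f = dehomogenize A * dehomogenize B by
    rw [← map_mul, ← hAB]) with hA | hB
  · exact Or.inl (hunit A B hAB hA)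
  · exact Or.inr (hunit B A (by rw [hAB, mul_comm]) hB)

theorem IsHomogeneous.irreducible_iff_forall_eval_ne_zero (hF : F.IsHomogeneous d) (hd2 : 2 ≤ d)
    (hd3 : d ≤ 3) : Irreducible F ↔ ∀ w ≠ 0, eval w F ≠ 0 :=
  ⟨fun h _ hw hFw => hF.not_irreducible_of_eval_eq_zero hd2 hw hFw h,
    hF.irreducible_of_forall_eval_ne_zero (by omega) hd3⟩

theorem isHomogeneous_det {σ R n : Type*} [CommRing R] [Fintype n] [DecidableEq n]
    {M : Matrix n n (MvPolynomial σ R)} (hM : ∀ a b, (M a b).IsHomogeneous 1) :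
    M.det.IsHomogeneous (Fintype.card n) := by
  rw [det_apply]
  refine IsHomogeneous.sum _ _ _ fun τ _ => ?_
  have hprod := IsHomogeneous.prod Finset.univ _ (fun _ => 1) fun i _ => hM (τ i) i
  rw [Finset.sum_const, smul_eq_mul, mul_one, Finset.card_univ] at hprod
  rw [← mem_homogeneousSubmodule] at hprod ⊢
  exact Submodule.smul_of_tower_mem _ _ hprod

end MvPolynomial

/-! ### Convex hulls of finite sets -/

section ConvexHull

variable {E : Type*}

theorem exists_pos_of_zero_mem_interior_convexHull [AddCommGroup E] [Module ℝ E]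
    [TopologicalSpace E] [ContinuousSMul ℝ E] {W : Set E}
    (hW : (0 : E) ∈ interior (convexHull ℝ W)) {f : Module.Dual ℝ E} (hf : f ≠ 0) :
    ∃ w ∈ W, 0 < f w := by
  by_contra! hle
  obtain ⟨z, hz⟩ : ∃ z, 0 < f z := by
    obtain ⟨z, hz⟩ := DFunLike.ne_iff.mp hf
    rcases (show f z ≠ 0 from hz).lt_or_gt with h | h
    · exact ⟨-z, by simpa using h⟩
    · exact ⟨z, h⟩
  have hsmul : Tendsto (fun t : ℝ => t • z) (𝓝[>] 0) (𝓝 0) := by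
    have : Continuous fun t : ℝ => t • z := continuous_id.smul continuous_const
    simpa using (this.tendsto 0).mono_left nhdsWithin_le_nhds
  obtain ⟨t, ht, htpos⟩ :=
    ((hsmul.eventually (mem_interior_iff_mem_nhds.mp hW)).and self_mem_nhdsWithin).exists
  have : f (t • z) ≤ 0 := convexHull_min hle (convex_halfSpace_le f.isLinear 0) ht
  rw [map_smul, smul_eq_mul] at this
  exact (mul_pos (Set.mem_Ioi.mp htpos) hz).not_ge this

variable [NormedAddCommGroup E] [NormedSpace ℝ E]

theorem exists_pos_forall_exists_mul_norm_le [FiniteDimensional ℝ E] [Nontrivial E] {W : Set E}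
    (hW : W.Finite) (hpos : ∀ f : Module.Dual ℝ E, f ≠ 0 → ∃ w ∈ W, 0 < f w) :
    ∃ δ > 0, ∀ f : StrongDual ℝ E, ∃ w ∈ W, δ * ‖f‖ ≤ f w := by
  have hpos' (f : StrongDual ℝ E) (hf : ‖f‖ = 1) : ∃ w ∈ hW.toFinset, 0 < f w := by
    obtain ⟨w, hw, hfw⟩ := hpos f.toLinearMap fun h => by
      rw [show f = 0 from ContinuousLinearMap.coe_injective (by simpa using h), norm_zero] at hf
      exact zero_ne_one hf
    exact ⟨w, by simpa using hw, hfw⟩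
  obtain ⟨f₀, hf₀, -⟩ := exists_dual_vector' ℝ (0 : E)
  have hWne : hW.toFinset.Nonempty := by
    obtain ⟨w, hw, -⟩ := hpos' f₀ hf₀
    exact ⟨w, hw⟩
  set φ : StrongDual ℝ E → ℝ := fun f => hW.toFinset.sup' hWne fun w => f w
  have hφ : Continuous φ := continuous_iff_continuousAt.mpr fun f =>
    ContinuousAt.finset_sup'_apply _ fun w _ =>
      (ContinuousLinearMap.apply ℝ ℝ w).continuous.continuousAt
  obtain ⟨g, hg, hgmin⟩ := (isCompact_sphere (0 : StrongDual ℝ E) 1).exists_isMinOn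
    ⟨f₀, by simpa using hf₀⟩ hφ.continuousOn
  obtain ⟨w₀, hw₀, hgw₀⟩ := hpos' g (by simpa using hg)
  refine ⟨φ g, hgw₀.trans_le (Finset.le_sup' (fun w => g w) hw₀), fun f => ?_⟩
  rcases (norm_nonneg f).eq_or_lt with hf | hf
  · obtain ⟨w, hw⟩ := hWne
    refine ⟨w, by simpa using hw, ?_⟩
    rw [← hf, mul_zero, show f = 0 from norm_eq_zero.mp hf.symm]
    rfl
  have hmin : φ g ≤ φ (‖f‖⁻¹ • f) := hgmin (by simp [norm_smul, hf.ne'])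
  obtain ⟨w, hw, hgw⟩ := (Finset.le_sup'_iff hWne).mp hmin
  refine ⟨w, by simpa using hw, ?_⟩
  rwa [FunLike.coe_smul, Pi.smul_apply, smul_eq_mul, le_inv_mul_iff₀ hf, mul_comm] at hgw

theorem zero_mem_interior_convexHull_iff [FiniteDimensional ℝ E] [Nontrivial E] {W : Set E}
    (hW : W.Finite) :
    (0 : E) ∈ interior (convexHull ℝ W) ↔ ∀ f : Module.Dual ℝ E, f ≠ 0 → ∃ w ∈ W, 0 < f w := by
  refine ⟨fun h _ => exists_pos_of_zero_mem_interior_convexHull h, fun hpos => ?_⟩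
  obtain ⟨δ, hδ, hδW⟩ := exists_pos_forall_exists_mul_norm_le hW hpos
  refine mem_interior.mpr ⟨ball 0 δ, fun y hy => ?_, isOpen_ball, mem_ball_self hδ⟩
  by_contra hyW
  obtain ⟨f, u, hfW, hfy⟩ := geometric_hahn_banach_closed_point (convex_convexHull ℝ W)
    (hW.isCompact_convexHull ℝ).isClosed hyW
  obtain ⟨w, hw, hfw⟩ := hδW f
  have : f y ≤ δ * ‖f‖ :=
    calc f y ≤ ‖f‖ * ‖y‖ := (le_abs_self _).trans (f.le_opNorm y)
      _ ≤ ‖f‖ * δ := by gcongr; exact (mem_ball_zero_iff.mp hy).le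
      _ = δ * ‖f‖ := mul_comm _ _
  linarith [hfW w (subset_convexHull ℝ W hw)]

theorem Submodule.exists_forall_norm_lt_mem_convexHull_iff (T : Submodule ℝ E) (W : Set T) :
    (∃ r > 0, ∀ y ∈ T, ‖y‖ < r → y ∈ convexHull ℝ (T.subtype '' W)) ↔
      (0 : T) ∈ interior (convexHull ℝ W) := by
  rw [mem_interior_iff_mem_nhds, Metric.mem_nhds_iff, ← LinearMap.image_convexHull]
  refine exists_congr fun r => and_congr_right fun _ => ⟨fun h y hy => ?_, fun h y hy hyr => ?_⟩
  · obtain ⟨z, hz, hzy⟩ := h y y.2 (by simpa using hy)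
    rwa [Subtype.ext hzy] at hz
  · exact ⟨⟨y, hy⟩, h (by simpa using hyr), rfl⟩

end ConvexHull

theorem LinearMap.BilinForm.forall_dual_ne_zero_iff {K V : Type*} [Field K] [AddCommGroup V]
    [Module K V] [FiniteDimensional K V] {B : LinearMap.BilinForm K V} (hB : B.Nondegenerate)
    (P : Module.Dual K V → Prop) : (∀ f, f ≠ 0 → P f) ↔ ∀ v, v ≠ 0 → P (B v) := by
  refine ⟨fun h v hv => h _ ((B.toDual hB).map_ne_zero_iff.mpr hv), fun h f hf => ?_⟩
  have hBf : B ((B.toDual hB).symm f) = f := LinearMap.ext (B.apply_toDual_symm_apply f)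
  simpa [hBf] using h _ ((B.toDual hB).symm.map_ne_zero_iff.mpr hf)

/-! ### Weights -/

local notation "𝔼" => (Fin 3 → ℝ) × (Fin 3 → ℝ) × (Fin 2 → ℝ)

def traceZero : Submodule ℝ 𝔼 where
  carrier := {y | ∑ a, y.1 a = 0 ∧ ∑ a, y.2.1 a = 0 ∧ ∑ a, y.2.2 a = 0}
  add_mem' := fun ⟨hy₁, hy₂, hy₃⟩ ⟨hz₁, hz₂, hz₃⟩ => by
    refine ⟨?_, ?_, ?_⟩ <;>
      simp only [Prod.fst_add, Prod.snd_add, Pi.add_apply, Finset.sum_add_distrib, *, add_zero]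
  zero_mem' := by simp
  smul_mem' := fun c _ ⟨hy₁, hy₂, hy₃⟩ => by
    refine ⟨?_, ?_, ?_⟩ <;>
      simp only [Prod.smul_fst, Prod.smul_snd, Pi.smul_apply, smul_eq_mul, ← Finset.mul_sum, *,
        mul_zero]

noncomputable def weight (i : Fin 2) (j l : Fin 3) : 𝔼 :=
  (fun a => (if a = j then 1 else 0) - 1/3, fun a => (if a = l then 1 else 0) - 1/3,
    fun a => (if a = i then 1 else 0) - 1/2)

theorem sum_ite_sub_eq_zero {n : ℕ} (j : Fin n) {c : ℝ} (hc : n * c = 1) :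
    ∑ a : Fin n, ((if a = j then 1 else 0) - c) = 0 := by
  simp [Finset.sum_sub_distrib, hc]

theorem weight_mem_traceZero (i : Fin 2) (j l : Fin 3) : weight i j l ∈ traceZero :=
  ⟨sum_ite_sub_eq_zero j (by norm_num), sum_ite_sub_eq_zero l (by norm_num),
    sum_ite_sub_eq_zero i (by norm_num)⟩

def pairing : LinearMap.BilinForm ℝ 𝔼 :=
  LinearMap.mk₂ ℝ (fun v y => v.1 ⬝ᵥ y.1 + v.2.1 ⬝ᵥ y.2.1 + v.2.2 ⬝ᵥ y.2.2)
    (fun _ _ _ => by simp only [Prod.fst_add, Prod.snd_add, add_dotProduct]; ring)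
    (fun _ _ _ => by simp only [Prod.smul_fst, Prod.smul_snd, smul_dotProduct, smul_eq_mul]; ring)
    (fun _ _ _ => by simp only [Prod.fst_add, Prod.snd_add, dotProduct_add]; ring)
    (fun _ _ _ => by simp only [Prod.smul_fst, Prod.smul_snd, dotProduct_smul, smul_eq_mul]; ring)

theorem eq_zero_of_pairing_self_eq_zero {v : 𝔼} (hv : pairing v v = 0) : v = 0 := by
  have h (n : ℕ) (u : Fin n → ℝ) : 0 ≤ u ⬝ᵥ u := Finset.sum_nonneg fun a _ => mul_self_nonneg (u a)
  simp only [pairing, LinearMap.mk₂_apply] at hv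
  have h₁ := h _ v.1
  have h₂ := h _ v.2.1
  have h₃ := h _ v.2.2
  refine Prod.ext ?_ (Prod.ext ?_ ?_) <;> exact dotProduct_self_eq_zero.mp (by linarith)

theorem dotProduct_ite_sub {n : ℕ} {u : Fin n → ℝ} (hu : ∑ a, u a = 0) (j : Fin n) (c : ℝ) :
    u ⬝ᵥ (fun a => (if a = j then 1 else 0) - c) = u j := by
  simp [dotProduct, mul_sub, Finset.sum_sub_distrib, ← Finset.sum_mul, hu]

theorem pairing_weight {v : 𝔼} (hv : v ∈ traceZero) (i : Fin 2) (j l : Fin 3) :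
    pairing v (weight i j l) = v.1 j + v.2.1 l + v.2.2 i := by
  simp only [pairing, LinearMap.mk₂_apply, weight, dotProduct_ite_sub hv.1,
    dotProduct_ite_sub hv.2.1, dotProduct_ite_sub hv.2.2]

theorem exists_forall_norm_lt_mem_convexHull_weight_iff (s : Fin 2 → Fin 3 → Fin 3 → Prop) :
    (∃ r > 0, ∀ y ∈ traceZero, ‖y‖ < r →
        y ∈ convexHull ℝ {w | ∃ i j l, s i j l ∧ w = weight i j l}) ↔
      ∀ v ∈ traceZero, v ≠ 0 → ∃ i j l, s i j l ∧ 0 < v.1 j + v.2.1 l + v.2.2 i := by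
  set W : Set traceZero := {w | ∃ i j l, s i j l ∧ (w : 𝔼) = weight i j l}
  have hW : traceZero.subtype '' W = {w | ∃ i j l, s i j l ∧ w = weight i j l} := by
    ext w
    refine ⟨fun ⟨w, hw, hww⟩ => hww ▸ hw, fun ⟨i, j, l, hs, hw⟩ => ?_⟩
    exact ⟨⟨_, weight_mem_traceZero i j l⟩, ⟨i, j, l, hs, rfl⟩, hw.symm⟩
  have hWfin : W.Finite := (Set.finite_range fun p : Fin 2 × Fin 3 × Fin 3 =>
      (⟨_, weight_mem_traceZero p.1 p.2.1 p.2.2⟩ : traceZero)).subset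
    fun w ⟨i, j, l, _, hw⟩ => ⟨(i, j, l), Subtype.ext hw.symm⟩
  have : Nontrivial traceZero :=
    nontrivial_of_ne ⟨_, weight_mem_traceZero 0 0 0⟩ 0 fun h => by
      have := congrFun (congrArg (fun y : traceZero => (y : 𝔼).1) h) 0
      norm_num [weight] at this
  have hB : (pairing.compl₁₂ traceZero.subtype traceZero.subtype).Nondegenerate :=
    ⟨fun v hv => Subtype.ext (eq_zero_of_pairing_self_eq_zero (hv v)),
      fun v hv => Subtype.ext (eq_zero_of_pairing_self_eq_zero (hv v))⟩
  rw [← hW, traceZero.exists_forall_norm_lt_mem_convexHull_iff,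
    zero_mem_interior_convexHull_iff hWfin, LinearMap.BilinForm.forall_dual_ne_zero_iff hB]
  refine ⟨fun h v hv hv0 => ?_, fun h v hv0 => ?_⟩
  · obtain ⟨w, ⟨i, j, l, hs, hw⟩, hpos⟩ := h ⟨v, hv⟩ (by simpa using hv0)
    simp only [LinearMap.compl₁₂_apply, Submodule.subtype_apply, hw] at hpos
    exact ⟨i, j, l, hs, pairing_weight hv i j l ▸ hpos⟩
  · obtain ⟨i, j, l, hs, hpos⟩ := h v v.2 (by simpa using hv0)
    refine ⟨⟨_, weight_mem_traceZero i j l⟩, ⟨i, j, l, hs, rfl⟩, ?_⟩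
    simpa only [LinearMap.compl₁₂_apply, Submodule.subtype_apply, pairing_weight v.2] using hpos

/-! ### Pencils -/

namespace Matrix

variable {n : Type*} [Fintype n]

theorem det_eq_zero_of_forall_exists_apply_eq_zero {R : Type*} [CommRing R] [DecidableEq n]
    {M : Matrix n n R} (h : ∀ σ : Equiv.Perm n, ∃ k, M (σ k) k = 0) : M.det = 0 := by
  rw [det_apply]
  refine Finset.sum_eq_zero fun σ _ => ?_
  obtain ⟨k, hk⟩ := h σ
  rw [Finset.prod_eq_zero (f := fun i => M (σ i) i) (Finset.mem_univ k) hk, smul_zero]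

theorem add_eq_zero_of_apply_perm_ne_zero {R : Type*} [Zero R] {M : Matrix n n R}
    {a b : n → ℝ} (ha : ∑ j, a j = 0) (hb : ∑ k, b k = 0) (hM : ∀ j k, M j k ≠ 0 → a j + b k ≤ 0)
    {σ : Equiv.Perm n} (hσ : ∀ k, M (σ k) k ≠ 0) (k : n) : a (σ k) + b k = 0 := by
  have hsum : ∑ k, (a (σ k) + b k) = 0 := by
    rw [Finset.sum_add_distrib, Equiv.sum_comp σ a, ha, hb, add_zero]
  exact (Finset.sum_eq_zero_iff_of_nonpos fun k _ => hM _ _ (hσ k)).mp hsum k (Finset.mem_univ k)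

theorem det_eq_zero_of_apply_ne_zero_add_le_neg {K : Type*} [Field K] [DecidableEq n] [Nonempty n]
    {M : Matrix n n K} {a b : n → ℝ} (ha : ∑ j, a j = 0) (hb : ∑ k, b k = 0) {c : ℝ} (hc : 0 < c)
    (hM : ∀ j k, M j k ≠ 0 → a j + b k ≤ -c) : M.det = 0 := by
  refine det_eq_zero_of_forall_exists_apply_eq_zero fun σ => ?_
  by_contra! hσ
  obtain ⟨k⟩ := ‹Nonempty n›
  have := add_eq_zero_of_apply_perm_ne_zero ha hb (fun j k h => (hM j k h).trans (by linarith)) hσ k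
  linarith [hM _ _ (hσ k)]

theorem mul_mul_transpose_apply {R : Type*} [NonUnitalSemiring R] (A M B : Matrix n n R) (j l : n) :
    (A * M * Bᵀ) j l = (A *ᵥ (M *ᵥ B l)) j := by
  rw [mulVec_mulVec]
  rfl

variable {K : Type*} [Field K] [DecidableEq n]

theorem exists_GL_mulVec_eq {v w : n → K} (hv : v ≠ 0) (hw : w ≠ 0) :
    ∃ g : GL n K, (g : Matrix n n K) *ᵥ v = w := by
  obtain ⟨e, he⟩ := Submodule.exists_linearEquiv_restrict_eq
    (LinearEquiv.coord K _ v hv ≪≫ₗ LinearEquiv.toSpanNonzeroSingleton K _ w hw)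
  have hev : e v = w := by
    have := he ⟨v, Submodule.mem_span_singleton_self v⟩
    rw [LinearEquiv.trans_apply, LinearEquiv.coord_self,
      LinearEquiv.toSpanNonzeroSingleton_one] at this
    exact this.symm
  refine ⟨GeneralLinearGroup.toLin.symm
    ((LinearMap.GeneralLinearGroup.generalLinearEquiv K _).symm e), ?_⟩
  rw [← mulVecLin_apply, ← GeneralLinearGroup.coe_toLin, MulEquiv.apply_symm_apply]
  exact hev

theorem exists_GL_row_eq (r : n) {v : n → K} (hv : v ≠ 0) :
    ∃ g : GL n K, (g : Matrix n n K) r = v := by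
  obtain ⟨g, hg⟩ :=
    exists_GL_mulVec_eq (Pi.single_ne_zero_iff.mpr (one_ne_zero' K) : Pi.single r 1 ≠ 0) hv
  refine ⟨GeneralLinearGroup.mkOfDetNeZero (g : Matrix n n K)ᵀ ?_, ?_⟩
  · rw [det_transpose]
    exact ((isUnit_iff_isUnit_det _).mp g.isUnit).ne_zero
  · ext k
    simp [← hg]

end Matrix

section Pencil

variable {K : Type*} [Field K] {n : Type*}

def pencil {ι : Type*} [Fintype ι] (x : ι → Matrix n n K) (w : ι → K) : Matrix n n K :=
  ∑ i, w i • x i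

theorem pencil_single {ι : Type*} [Fintype ι] [DecidableEq ι] (x : ι → Matrix n n K) (i : ι) :
    pencil x (Pi.single i 1) = x i := by
  simp [pencil, Pi.single_apply]

theorem exists_apply_ne_zero_of_pencil_apply_ne_zero {ι : Type*} [Fintype ι]
    {x : ι → Matrix n n K} {w : ι → K} {a b : n} (h : pencil x w a b ≠ 0) : ∃ i, x i a b ≠ 0 := by
  by_contra! hx
  simp [pencil, Matrix.sum_apply, hx] at h

theorem pencil_mul_mul [Fintype n] {ι : Type*} [Fintype ι] (A B : Matrix n n K)
    (C : Matrix ι ι K) (x : ι → Matrix n n K) (w : ι → K) :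
    pencil (fun i => A * pencil x (C i) * B) w = A * pencil x (w ᵥ* C) * B := by
  simp only [pencil, Finset.mul_sum, Finset.sum_mul, Matrix.mul_smul, Matrix.smul_mul,
    Finset.smul_sum, smul_smul, vecMul, dotProduct, Finset.sum_smul]
  exact Finset.sum_comm

theorem exists_pencil_apply_eq_zero (y : Fin 2 → Matrix n n K) (a b : n) :
    ∃ w ≠ 0, pencil y w a b = 0 := by
  by_cases h : y 1 a b = 0
  · exact ⟨Pi.single 1 1, by simp, by rwa [pencil_single]⟩
  · refine ⟨![y 1 a b, -y 0 a b], fun hw => h (by simpa using congrFun hw 0), ?_⟩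
    simp [pencil, Fin.sum_univ_two]
    ring

variable [Fintype n] [DecidableEq n]

noncomputable def pencilForm (x : Fin 2 → Matrix n n K) : MvPolynomial (Fin 2) K :=
  (Matrix.of fun a b => X 0 * C (x 0 a b) + X 1 * C (x 1 a b)).det

theorem eval_pencilForm (x : Fin 2 → Matrix n n K) (w : Fin 2 → K) :
    eval w (pencilForm x) = (pencil x w).det := by
  rw [pencilForm, RingHom.map_det]
  congr 1
  ext a b
  simp [pencil, Fin.sum_univ_two, mul_comm]

theorem isHomogeneous_pencilForm (x : Fin 2 → Matrix n n K) :
    (pencilForm x).IsHomogeneous (Fintype.card n) :=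
  isHomogeneous_det fun _ _ => ((isHomogeneous_X K 0).mul (isHomogeneous_C _ _)).add
    ((isHomogeneous_X K 1).mul (isHomogeneous_C _ _))

end Pencil

theorem exists_forall_apply_eq_imp_eq {a : Fin 3 → ℝ} (ha : ∑ j, a j = 0) (ha0 : a ≠ 0) :
    ∃ r, ∀ j, a j = a r → j = r := by
  by_contra! h
  obtain ⟨j₀, h₀, hj₀⟩ := h 0
  obtain ⟨j₁, h₁, hj₁⟩ := h 1
  obtain ⟨j₂, h₂, hj₂⟩ := h 2
  rw [Fin.sum_univ_three] at ha
  refine ha0 (funext fun j => ?_)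
  fin_cases j₀ <;> fin_cases j₁ <;> fin_cases j₂ <;> fin_cases j <;> simp_all <;> linarith

section Stability

variable {K : Type*} [Field K]

theorem exists_det_pencil_eq_zero_of_add_nonpos (y : Fin 2 → Matrix (Fin 3) (Fin 3) K)
    {a b : Fin 3 → ℝ} (ha : ∑ j, a j = 0) (hb : ∑ k, b k = 0) (hab : a ≠ 0 ∨ b ≠ 0)
    (hy : ∀ i j k, y i j k ≠ 0 → a j + b k ≤ 0) : ∃ w ≠ 0, (pencil y w).det = 0 := by
  by_cases htight : ∃ σ : Equiv.Perm (Fin 3), ∀ k, a (σ k) + b k = 0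
  · obtain ⟨σ₀, hσ₀⟩ := htight
    have ha0 : a ≠ 0 := by
      rintro rfl
      exact hab.resolve_left (not_not.mpr rfl) (funext fun k => by simpa using hσ₀ k)
    obtain ⟨r, hr⟩ := exists_forall_apply_eq_imp_eq ha ha0
    -- every permutation along which `a (σ k) + b k = 0` sends `σ₀⁻¹ r` to `r`, so the member of
    -- the pencil vanishing at that entry is singular
    obtain ⟨w, hw, hwr⟩ := exists_pencil_apply_eq_zero y r (σ₀.symm r)
    refine ⟨w, hw, det_eq_zero_of_forall_exists_apply_eq_zero fun σ => ?_⟩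
    by_contra! hσ
    have hσr : σ (σ₀.symm r) = r := by
      refine hr _ ?_
      have h₁ := add_eq_zero_of_apply_perm_ne_zero ha hb (fun j k h => ?_) hσ (σ₀.symm r)
      · have h₂ := hσ₀ (σ₀.symm r)
        rw [Equiv.apply_symm_apply] at h₂
        linarith
      · obtain ⟨i, hi⟩ := exists_apply_ne_zero_of_pencil_apply_ne_zero h
        exact hy i j k hi
    exact hσ (σ₀.symm r) (by rw [hσr]; exact hwr)
  · push Not at htight
    refine ⟨Pi.single 0 1, by simp, ?_⟩
    rw [pencil_single]
    refine det_eq_zero_of_forall_exists_apply_eq_zero fun σ => ?_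
    by_contra! hσ
    obtain ⟨k, hk⟩ := htight σ
    exact hk (add_eq_zero_of_apply_perm_ne_zero ha hb (hy 0) hσ k)

theorem exists_det_pencil_eq_zero_of_weight_nonpos (y : Fin 2 → Matrix (Fin 3) (Fin 3) K)
    {v : 𝔼} (hv : v ∈ traceZero) (hv0 : v ≠ 0)
    (hy : ∀ i j l, y i j l ≠ 0 → v.1 j + v.2.1 l + v.2.2 i ≤ 0) :
    ∃ w ≠ 0, (pencil y w).det = 0 := by
  obtain ⟨ha, hb, hc⟩ := hv
  rw [Fin.sum_univ_two] at hc
  rcases lt_trichotomy (v.2.2 0) 0 with hneg | hzero | hpos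
  · refine ⟨Pi.single 1 1, by simp, ?_⟩
    rw [pencil_single]
    exact det_eq_zero_of_apply_ne_zero_add_le_neg ha hb (c := v.2.2 1) (by linarith)
      fun j l h => by linarith [hy 1 j l h]
  · have hc0 (i : Fin 2) : v.2.2 i = 0 := by fin_cases i <;> simp <;> linarith
    refine exists_det_pencil_eq_zero_of_add_nonpos y ha hb ?_ fun i j k h => ?_
    · by_contra! hab
      exact hv0 (Prod.ext hab.1 (Prod.ext hab.2 (funext hc0)))
    · linarith [hy i j k h, hc0 i]
  · refine ⟨Pi.single 0 1, by simp, ?_⟩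
    rw [pencil_single]
    exact det_eq_zero_of_apply_ne_zero_add_le_neg ha hb hpos fun j l h => by linarith [hy 0 j l h]

theorem exists_GL_apply_two_eq_zero_of_det_pencil_eq_zero (x : Fin 2 → Matrix (Fin 3) (Fin 3) K)
    {w : Fin 2 → K} (hw : w ≠ 0) (hdet : (pencil x w).det = 0) :
    ∃ (g₁ g₂ : GL (Fin 3) K) (g₃ : GL (Fin 2) K), ∀ i j, j ≠ 2 →
      ((g₁ : Matrix (Fin 3) (Fin 3) K) * pencil x ((g₃ : Matrix (Fin 2) (Fin 2) K) i) *
        (g₂ : Matrix (Fin 3) (Fin 3) K)ᵀ) j 2 = 0 := by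
  obtain ⟨g₃, hg₃⟩ := exists_GL_row_eq 0 hw
  obtain ⟨u, hu, hNu⟩ := exists_mulVec_eq_zero_iff.mpr hdet
  obtain ⟨g₂, hg₂⟩ := exists_GL_row_eq 2 hu
  set p := pencil x ((g₃ : Matrix (Fin 2) (Fin 2) K) 1) *ᵥ u
  obtain ⟨g₁, hg₁⟩ :
      ∃ g₁ : GL (Fin 3) K, ∀ j ≠ 2, ((g₁ : Matrix (Fin 3) (Fin 3) K) *ᵥ p) j = 0 := by
    by_cases hp : p = 0
    · exact ⟨1, fun j _ => by simp [hp]⟩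
    · obtain ⟨g₁, hg₁⟩ := exists_GL_mulVec_eq hp (Pi.single_ne_zero_iff.mpr one_ne_zero)
      exact ⟨g₁, fun j hj => by rw [hg₁]; exact Pi.single_eq_of_ne hj 1⟩
  refine ⟨g₁, g₂, g₃, fun i j hj => ?_⟩
  rw [mul_mul_transpose_apply, hg₂]
  fin_cases i
  · simp [hg₃, hNu]
  · exact hg₁ j hj

theorem forall_det_pencil_ne_zero_iff (x : Fin 2 → Matrix (Fin 3) (Fin 3) K) :
    (∀ w ≠ 0, (pencil x w).det ≠ 0) ↔
      ∀ (g₁ g₂ : GL (Fin 3) K) (g₃ : GL (Fin 2) K), ∀ v ∈ traceZero, v ≠ 0 → ∃ i j l,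
        ((g₁ : Matrix (Fin 3) (Fin 3) K) * pencil x ((g₃ : Matrix (Fin 2) (Fin 2) K) i) *
          (g₂ : Matrix (Fin 3) (Fin 3) K)ᵀ) j l ≠ 0 ∧ 0 < v.1 j + v.2.1 l + v.2.2 i := by
  refine ⟨fun h g₁ g₂ g₃ v hv hv0 => ?_, fun h w hw hdet => ?_⟩
  · by_contra! hle
    obtain ⟨w, hw, hdet⟩ := exists_det_pencil_eq_zero_of_weight_nonpos _ hv hv0 hle
    rw [pencil_mul_mul, det_mul, det_mul, det_transpose] at hdet
    refine h (w ᵥ* (g₃ : Matrix (Fin 2) (Fin 2) K)) (fun h0 => hw ?_) ?_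
    · exact vecMul_injective_of_isUnit g₃.isUnit (by simp only [h0, zero_vecMul])
    · have hdet₁ := ((isUnit_iff_isUnit_det _).mp g₁.isUnit).ne_zero
      have hdet₂ := ((isUnit_iff_isUnit_det _).mp g₂.isUnit).ne_zero
      simpa [hdet₁, hdet₂] using hdet
  · obtain ⟨g₁, g₂, g₃, hg⟩ := exists_GL_apply_two_eq_zero_of_det_pencil_eq_zero x hw hdet
    -- `(1, 1, -2; -1, -1, 2; 0)` is positive only on the weights of the entries `(j, 2)`, `j ≠ 2`
    obtain ⟨i, j, l, hne, hpos⟩ := h g₁ g₂ g₃ (![1, 1, -2], ![-1, -1, 2], 0)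
      ⟨by simp [Fin.sum_univ_three]; norm_num, by simp [Fin.sum_univ_three]; norm_num, by simp⟩
      (fun h => by simpa using congrFun (congrArg Prod.fst h) 0)
    fin_cases j <;> fin_cases l <;> norm_num at hpos <;> exact hne (hg _ _ (by decide))

end Stability

theorem irreducible_iff_kStable_E6_general {K : Type*} [Field K]
    (x : Fin 2 → Matrix (Fin 3) (Fin 3) K) :
    Irreducible ((Matrix.of fun a b =>
        (X 0 : MvPolynomial (Fin 2) K) * C (x 0 a b) + X 1 * C (x 1 a b)).det) ↔
      ∀ (g₁ g₂ : GL (Fin 3) K) (g₃ : GL (Fin 2) K),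
        ∃ r > 0, ∀ y : (Fin 3 → ℝ) × (Fin 3 → ℝ) × (Fin 2 → ℝ),
          (∑ a, y.1 a = 0 ∧ ∑ a, y.2.1 a = 0 ∧ ∑ a, y.2.2 a = 0) → ‖y‖ < r →
          y ∈ convexHull ℝ
            {w : (Fin 3 → ℝ) × (Fin 3 → ℝ) × (Fin 2 → ℝ) |
              ∃ (i : Fin 2) (j l : Fin 3),
                ((g₁ : Matrix (Fin 3) (Fin 3) K) *
                    (∑ j', (g₃ : Matrix (Fin 2) (Fin 2) K) i j' • x j') *
                    (g₂ : Matrix (Fin 3) (Fin 3) K)ᵀ) j l ≠ 0 ∧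
                  w = (fun a => (if a = j then (1 : ℝ) else 0) - 1/3,
                       fun a => (if a = l then (1 : ℝ) else 0) - 1/3,
                       fun a => (if a = i then (1 : ℝ) else 0) - 1/2)} := by
  have hF : (pencilForm x).IsHomogeneous 3 := isHomogeneous_pencilForm x
  refine (hF.irreducible_iff_forall_eval_ne_zero (by norm_num) le_rfl).trans ?_
  simp only [eval_pencilForm]
  exact (forall_det_pencil_ne_zero_iff x).trans (forall_congr' fun g₁ => forall_congr' fun g₂ =>
    forall_congr' fun g₃ => (exists_forall_norm_lt_mem_convexHull_weight_iff _).symm)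

/-- Theorem (2.1), `E₆` case: for a pair `x = (x₁, x₂)` of `3×3` matrices over a number
field `K`, the binary cubic form `F_x(X,Y) = det(X·x₁ + Y·x₂)` is irreducible in `K[X,Y]`
if and only if `x` is `K`-stable: for every
`g = (g₁, g₂, g₃) ∈ GL₃(K) × GL₃(K) × GL₂(K)`, the convex hull of the projected weight
vectors `(e_j - (1/3)(1,1,1), e_k - (1/3)(1,1,1), f_i - (1/2)(1,1))` of the nonvanishing
coordinates of `g·x` contains a neighborhood of the origin in the trace-zero subspace
`𝔱* ⊆ ℝ³ × ℝ³ × ℝ²`.  Here `(g·x)_i = g₁ · (∑ j, (g₃)_{ij} x_j) · g₂ᵀ`, which encodes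
`M_{g·x}(v) = g₁ · M_x(v·g₃) · g₂ᵀ`. -/
theorem irreducible_iff_kStable_E6 {K : Type*} [Field K] [NumberField K]
    (x : Fin 2 → Matrix (Fin 3) (Fin 3) K) :
    Irreducible ((Matrix.of fun a b =>
        (X 0 : MvPolynomial (Fin 2) K) * C (x 0 a b) + X 1 * C (x 1 a b)).det) ↔
      ∀ (g₁ g₂ : GL (Fin 3) K) (g₃ : GL (Fin 2) K),
        ∃ r > 0, ∀ y : (Fin 3 → ℝ) × (Fin 3 → ℝ) × (Fin 2 → ℝ),
          (∑ a, y.1 a = 0 ∧ ∑ a, y.2.1 a = 0 ∧ ∑ a, y.2.2 a = 0) → ‖y‖ < r →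
          y ∈ convexHull ℝ
            {w : (Fin 3 → ℝ) × (Fin 3 → ℝ) × (Fin 2 → ℝ) |
              ∃ (i : Fin 2) (j l : Fin 3),
                ((g₁ : Matrix (Fin 3) (Fin 3) K) *
                    (∑ j', (g₃ : Matrix (Fin 2) (Fin 2) K) i j' • x j') *
                    (g₂ : Matrix (Fin 3) (Fin 3) K)ᵀ) j l ≠ 0 ∧
                  w = (fun a => (if a = j then (1 : ℝ) else 0) - 1/3,
                       fun a => (if a = l then (1 : ℝ) else 0) - 1/3,
                       fun a => (if a = i then (1 : ℝ) else 0) - 1/2)} :=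
  irreducible_iff_kStable_E6_general x
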